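/- arXiv:1611.10211 — 7 statements merged into one kernel-verified Lean document; each statement's English description precedes it below -/
import Mathlib

section
/- Let b ≥ 1 be an integer and define p*_i = 3(i+1)²/((b+1)(2b+1)(4b+3)) for 0 ≤ i ≤ 2b. Then p* is a sensor-deployment distribution (its entries are positive, strictly increasing, and sum to 1), and for every sensor-deployment distribution p one has d_min(p) ≤ d_min(p*) = √(3/((b+1)(2b+1)(4b+3))). That is, p* maximizes d_min over all sensor-deployment distributions. -/
open Finset Real

/-- The "gap" vector: `d 0 = √p₀`, `d i = √pᵢ - √p_{i-1}` for `i ≥ 1`. -/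
noncomputable def dvec (p : ℕ → ℝ) (i : ℕ) : ℝ :=
  if i = 0 then Real.sqrt (p 0) else Real.sqrt (p i) - Real.sqrt (p (i - 1))

/-- `d_min(p) = min_{0 ≤ i ≤ 2b} d_i(p)`. -/
noncomputable def dmin (b : ℕ) (p : ℕ → ℝ) : ℝ :=
  (Finset.range (2 * b + 1)).inf' (Finset.nonempty_range_iff.mpr (by omega)) (dvec p)

/-- A sensor-deployment distribution: `0 < p₀ < p₁ < ⋯ < p_{2b}` and `∑ pᵢ = 1`. -/
def IsSensorDist (b : ℕ) (p : ℕ → ℝ) : Prop :=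
  0 < p 0 ∧ (∀ i, i < 2 * b → p i < p (i + 1)) ∧ ∑ i ∈ Finset.range (2 * b + 1), p i = 1

lemma sum_sq_real (n : ℕ) :
    ∑ i ∈ Finset.range n, ((i : ℝ) + 1) ^ 2 = (n : ℝ) * ((n : ℝ) + 1) * (2 * (n : ℝ) + 1) / 6 := by
  induction n with
  | zero => simp
  | succ n ih => rw [Finset.sum_range_succ, ih]; push_cast; ring

theorem optimal_sensor_distribution (b : ℕ) (hb : 1 ≤ b) (pstar : ℕ → ℝ)
    (hpstar : ∀ i ≤ 2 * b,
      pstar i = 3 * ((i : ℝ) + 1) ^ 2 / (((b : ℝ) + 1) * (2 * (b : ℝ) + 1) * (4 * (b : ℝ) + 3))) :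
    IsSensorDist b pstar ∧
    (∀ p : ℕ → ℝ, IsSensorDist b p → dmin b p ≤ dmin b pstar) ∧
    dmin b pstar =
      Real.sqrt (3 / (((b : ℝ) + 1) * (2 * (b : ℝ) + 1) * (4 * (b : ℝ) + 3))) := by
  have hK : (0:ℝ) < ((b : ℝ) + 1) * (2 * (b : ℝ) + 1) * (4 * (b : ℝ) + 3) := by positivity
  set K : ℝ := ((b : ℝ) + 1) * (2 * (b : ℝ) + 1) * (4 * (b : ℝ) + 3) with hKdef
  -- square roots of pstar
  have hsqrt : ∀ i ≤ 2 * b, Real.sqrt (pstar i) = ((i : ℝ) + 1) * Real.sqrt (3 / K) := by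
    intro i hi
    rw [hpstar i hi, show 3 * ((i : ℝ) + 1) ^ 2 / K = ((i : ℝ) + 1) ^ 2 * (3 / K) by ring,
      Real.sqrt_mul (by positivity), Real.sqrt_sq (by positivity)]
  have hdvec : ∀ i ∈ Finset.range (2 * b + 1), dvec pstar i = Real.sqrt (3 / K) := by
    intro i hi
    rw [Finset.mem_range] at hi
    rcases i with _ | j
    · simp [dvec, hsqrt 0 (by omega)]
    · have h1 : j + 1 ≤ 2 * b := by omega
      have h2 : j ≤ 2 * b := by omega
      simp only [dvec, Nat.succ_ne_zero, if_false, Nat.add_sub_cancel]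
      rw [hsqrt (j+1) h1, hsqrt j h2]
      push_cast; ring
  -- value of dmin pstar
  have hdminstar : dmin b pstar = Real.sqrt (3 / K) := by
    apply le_antisymm
    · calc dmin b pstar ≤ dvec pstar 0 :=
            Finset.inf'_le _ (Finset.mem_range.mpr (by omega))
        _ = Real.sqrt (3 / K) := hdvec 0 (Finset.mem_range.mpr (by omega))
    · exact Finset.le_inf' _ _ (fun i hi => (hdvec i hi).ge)
  -- pstar is a sensor distribution
  have hsd : IsSensorDist b pstar := by
    refine ⟨?_, ?_, ?_⟩
    · rw [hpstar 0 (by omega)]; positivity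
    · intro i hi
      rw [hpstar i (by omega), hpstar (i+1) (by omega), div_lt_div_iff₀ hK hK]
      push_cast
      nlinarith [mul_pos hK (show (0:ℝ) < 2 * (i:ℝ) + 3 by positivity), hK]
    · rw [Finset.sum_congr rfl (fun i hi => hpstar i (by
        have := Finset.mem_range.mp hi; omega))]
      rw [show (∑ i ∈ Finset.range (2*b+1), 3 * ((i:ℝ)+1)^2 / K)
          = (∑ i ∈ Finset.range (2*b+1), ((i:ℝ)+1)^2) * (3 / K) by
        rw [Finset.sum_mul]; exact Finset.sum_congr rfl (fun i _ => by ring)]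
      rw [sum_sq_real, hKdef]
      push_cast
      field_simp
      ring
  refine ⟨hsd, ?_, hdminstar⟩
  -- optimality
  intro p hp
  obtain ⟨hp0, hmono, hsum⟩ := hp
  set d := dmin b p with hddef
  rw [hdminstar]
  rcases le_or_gt d 0 with hd | hd
  · exact hd.trans (Real.sqrt_nonneg _)
  · have hd_le : ∀ i ∈ Finset.range (2*b+1), d ≤ dvec p i :=
      fun i hi => Finset.inf'_le _ hi
    have hpos : ∀ i ≤ 2 * b, 0 < p i := by
      intro i hi
      induction i with
      | zero => exact hp0
      | succ j ih => exact (ih (by omega)).trans (hmono j (by omega))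
    have hge : ∀ i ≤ 2 * b, ((i : ℝ) + 1) * d ≤ Real.sqrt (p i) := by
      intro i hi
      induction i with
      | zero =>
        have h := hd_le 0 (Finset.mem_range.mpr (by omega))
        simp only [dvec, if_true, reduceIte] at h
        push_cast
        linarith
      | succ j ih =>
        have h1 := hd_le (j+1) (Finset.mem_range.mpr (by omega))
        simp only [dvec, Nat.succ_ne_zero, if_false, Nat.add_sub_cancel] at h1
        have h2 := ih (by omega)
        push_cast at h2 ⊢
        linarith
    have hpge : ∀ i ∈ Finset.range (2*b+1), ((i : ℝ) + 1) ^ 2 * d ^ 2 ≤ p i := by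
      intro i hi
      have hi' : i ≤ 2 * b := by have := Finset.mem_range.mp hi; omega
      have h1 := hge i hi'
      have h2 : (((i : ℝ) + 1) * d) ^ 2 ≤ Real.sqrt (p i) ^ 2 :=
        pow_le_pow_left₀ (by positivity) h1 2
      rw [Real.sq_sqrt (hpos i hi').le] at h2
      nlinarith [h2]
    have hsumle : ∑ i ∈ Finset.range (2*b+1), ((i : ℝ) + 1) ^ 2 * d ^ 2 ≤ 1 := by
      exact le_trans (Finset.sum_le_sum hpge) (le_of_eq hsum)
    rw [show (∑ i ∈ Finset.range (2*b+1), ((i:ℝ)+1)^2 * d^2)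
        = (∑ i ∈ Finset.range (2*b+1), ((i:ℝ)+1)^2) * d^2 by rw [Finset.sum_mul],
      sum_sq_real] at hsumle
    push_cast at hsumle
    have hd2 : d ^ 2 ≤ 3 / K := by
      rw [le_div_iff₀ hK, hKdef]
      nlinarith [hsumle]
    calc d = Real.sqrt (d ^ 2) := (Real.sqrt_sq hd.le).symm
      _ ≤ Real.sqrt (3 / K) := Real.sqrt_le_sqrt hd2
end

section
/- Let b ≥ 1 be an integer and let p be a sensor-deployment distribution. Then d_min(p) = √p_{2b}/(2b+1) holds if and only if √p_i = (i+1)·√p_{2b}/(2b+1) for all 0 ≤ i ≤ 2b, and in that case the normalization Σ_{i=0}^{2b} p_i = 1 forces p_i = 3(i+1)²/((b+1)(2b+1)(4b+3)) for all 0 ≤ i ≤ 2b. -/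
open Finset Real

/- The gaps `dᵢ` telescope to `√p_{2b}`, so `√p_{2b}/(2b+1)` is their mean and
`d_min` attains it exactly when all gaps are equal, i.e. when `√pᵢ` grows linearly in `i`.
Then `∑ pᵢ = 1` together with `∑_{i<n} (i+1)² = n(n+1)(2n+1)/6` fixes the common gap. -/

theorem Finset.inf'_eq_iff_forall_eq_of_sum_eq {ι M : Type*} [AddCommMonoid M] [LinearOrder M]
    [IsOrderedCancelAddMonoid M] {s : Finset ι} (H : s.Nonempty) {f : ι → M} {c : M}
    (hsum : ∑ i ∈ s, f i = s.card • c) :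
    s.inf' H f = c ↔ ∀ i ∈ s, f i = c := by
  constructor
  · intro h
    have hle : ∀ i ∈ s, c ≤ f i := fun i hi => h ▸ inf'_le f hi
    intro i hi
    exact ((sum_eq_sum_iff_of_le hle).1 (by rw [sum_const, hsum]) i hi).symm
  · intro h
    obtain ⟨j, hj⟩ := H
    exact le_antisymm (h j hj ▸ inf'_le f hj) (le_inf' _ f fun i hi => (h i hi).ge)

theorem sum_range_dvec (p : ℕ → ℝ) (n : ℕ) :
    ∑ i ∈ range (n + 1), dvec p i = √(p n) := by
  induction n with
  | zero => simp [dvec]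
  | succ n ih => rw [sum_range_succ, ih]; simp [dvec]

theorem forall_dvec_eq_iff (p : ℕ → ℝ) (n : ℕ) (c : ℝ) :
    (∀ i ≤ n, dvec p i = c) ↔ ∀ i ≤ n, √(p i) = (i + 1) * c := by
  constructor
  · intro h i hi
    induction i with
    | zero => simpa [dvec] using h 0 hi
    | succ i ih =>
      have hgap : √(p (i + 1)) - √(p i) = c := by simpa [dvec] using h (i + 1) hi
      push_cast
      linarith [ih (by omega)]
  · rintro h (_ | i) hi
    · simpa [dvec] using h 0 hi
    · simp only [dvec, Nat.succ_ne_zero, if_false, Nat.add_sub_cancel]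
      rw [h (i + 1) hi, h i (by omega)]
      push_cast
      ring

theorem sum_range_add_one_sq (n : ℕ) :
    ∑ i ∈ range n, ((i : ℝ) + 1) ^ 2 = (n : ℝ) * (n + 1) * (2 * n + 1) / 6 := by
  induction n with
  | zero => simp
  | succ n ih =>
    rw [sum_range_succ, ih]
    push_cast
    ring

theorem eq_of_sqrt_linear_of_sum_eq_one {p : ℕ → ℝ} {n : ℕ} {c : ℝ}
    (hnonneg : ∀ i ≤ n, 0 ≤ p i) (hsum : ∑ i ∈ range (n + 1), p i = 1)
    (hlin : ∀ i ≤ n, √(p i) = (i + 1) * c) :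
    ∀ i ≤ n, p i = 6 * ((i : ℝ) + 1) ^ 2 / ((n + 1) * (n + 2) * (2 * n + 3)) := by
  have hsq : ∀ i ≤ n, p i = ((i : ℝ) + 1) ^ 2 * c ^ 2 := by
    intro i hi
    rw [← mul_pow, ← hlin i hi, sq_sqrt (hnonneg i hi)]
  have hc : c ^ 2 * ((n + 1) * (n + 2) * (2 * n + 3)) = 6 := by
    have h := hsum
    rw [sum_congr rfl fun i hi => hsq i (Nat.lt_succ_iff.1 (mem_range.1 hi)), ← sum_mul,
      sum_range_add_one_sq] at h
    push_cast at h
    linarith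
  intro i hi
  rw [hsq i hi, ← hc]
  field_simp

theorem IsSensorDist.pos {b : ℕ} {p : ℕ → ℝ} (hp : IsSensorDist b p) :
    ∀ i ≤ 2 * b, 0 < p i := by
  intro i hi
  induction i with
  | zero => exact hp.1
  | succ i ih => exact (ih (by omega)).trans (hp.2.1 i (by omega))

theorem dmin_eq_iff_forall_dvec_eq (b : ℕ) (p : ℕ → ℝ) :
    dmin b p = √(p (2 * b)) / (2 * b + 1) ↔
      ∀ i ≤ 2 * b, dvec p i = √(p (2 * b)) / (2 * b + 1) := by
  refine (inf'_eq_iff_forall_eq_of_sum_eq _ ?_).trans ?_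
  · rw [sum_range_dvec, card_range, nsmul_eq_mul]
    push_cast
    field_simp
  · simp only [mem_range, Nat.lt_succ_iff]

theorem dmin_eq_bound_iff_general (b : ℕ) (p : ℕ → ℝ) (hp : IsSensorDist b p) :
    (dmin b p = Real.sqrt (p (2 * b)) / (2 * (b : ℝ) + 1) ↔
      ∀ i ≤ 2 * b,
        Real.sqrt (p i) = ((i : ℝ) + 1) * Real.sqrt (p (2 * b)) / (2 * (b : ℝ) + 1)) ∧
    (dmin b p = Real.sqrt (p (2 * b)) / (2 * (b : ℝ) + 1) →
      ∀ i ≤ 2 * b,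
        p i = 3 * ((i : ℝ) + 1) ^ 2 /
          (((b : ℝ) + 1) * (2 * (b : ℝ) + 1) * (4 * (b : ℝ) + 3))) := by
  have key := (dmin_eq_iff_forall_dvec_eq b p).trans (forall_dvec_eq_iff p _ _)
  refine ⟨by simpa only [mul_div_assoc] using key, fun hd i hi => ?_⟩
  rw [eq_of_sqrt_linear_of_sum_eq_one (fun j hj => (hp.pos j hj).le) hp.2.2 (key.1 hd) i hi]
  push_cast
  field_simp
  ring

theorem dmin_eq_bound_iff (b : ℕ) (hb : 1 ≤ b) (p : ℕ → ℝ) (hp : IsSensorDist b p) :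
    (dmin b p = Real.sqrt (p (2 * b)) / (2 * (b : ℝ) + 1) ↔
      ∀ i ≤ 2 * b,
        Real.sqrt (p i) = ((i : ℝ) + 1) * Real.sqrt (p (2 * b)) / (2 * (b : ℝ) + 1)) ∧
    (dmin b p = Real.sqrt (p (2 * b)) / (2 * (b : ℝ) + 1) →
      ∀ i ≤ 2 * b,
        p i = 3 * ((i : ℝ) + 1) ^ 2 /
          (((b : ℝ) + 1) * (2 * (b : ℝ) + 1) * (4 * (b : ℝ) + 3))) :=
  dmin_eq_bound_iff_general b p hp
end

section
/- Let b ≥ 1 be an integer, let p = (p_0, …, p_{2b}) be a probability vector with all entries positive, and fix an index i with 0 ≤ i ≤ 2b−1 such that p_i < p_{i+1}. Then the infimum of the Kullback–Leibler divergence D(q ∥ p) = Σ_{k=0}^{2b} q_k log₂(q_k/p_k) over all probability vectors q = (q_0, …, q_{2b}) (entries nonnegative, summing to 1, with the convention 0·log₂(0/p) = 0) satisfying the constraint q_{i+1} ≤ q_i is equal to log₂( 1 / (1 − (√p_{i+1} − √p_i)²) ), and the infimum is attained. -/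
open Finset Real

/-- Kullback–Leibler divergence (base 2) between distributions on `{0, …, 2b}`,
with the convention `0 · log₂(0/p) = 0`. -/
noncomputable def KL (b : ℕ) (q p : ℕ → ℝ) : ℝ :=
  ∑ k ∈ Finset.range (2 * b + 1),
    if q k = 0 then 0 else q k * Real.logb 2 (q k / p k)

lemma sum_two_spikes {n i j : ℕ} (hij : i ≠ j) (hi : i ∈ Finset.range n)
    (hj : j ∈ Finset.range n) (u v : ℝ) :
    ∑ k ∈ Finset.range n, (if k = i then u else if k = j then v else 0) = u + v := by
  have h : ∀ k, (if k = i then u else if k = j then v else 0)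
      = (if k = i then u else 0) + (if k = j then v else 0) := by
    intro k
    by_cases h1 : k = i
    · subst h1; simp [hij]
    · simp [h1]
  rw [Finset.sum_congr rfl (fun k _ => h k), Finset.sum_add_distrib,
    Finset.sum_ite_eq' _ i (fun _ => u), Finset.sum_ite_eq' _ j (fun _ => v)]
  simp [hi, hj]

set_option maxHeartbeats 1000000 in
theorem kl_infimum_under_swap_constraint (b : ℕ) (hb : 1 ≤ b) (p : ℕ → ℝ)
    (hp_pos : ∀ k ≤ 2 * b, 0 < p k)
    (hp_sum : ∑ k ∈ Finset.range (2 * b + 1), p k = 1)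
    (i : ℕ) (hi : i + 1 ≤ 2 * b) (hlt : p i < p (i + 1)) :
    IsLeast
      {D : ℝ | ∃ q : ℕ → ℝ,
        (∀ k ≤ 2 * b, 0 ≤ q k) ∧
        (∑ k ∈ Finset.range (2 * b + 1), q k = 1) ∧
        q (i + 1) ≤ q i ∧
        D = KL b q p}
      (Real.logb 2 (1 / (1 - (Real.sqrt (p (i + 1)) - Real.sqrt (p i)) ^ 2))) := by
  set n := 2 * b + 1 with hn
  have ha : 0 < p i := hp_pos i (by omega)
  have hc : 0 < p (i + 1) := hp_pos (i + 1) hi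
  set a := p i with ha'
  set c := p (i + 1) with hc'
  set g : ℝ := Real.sqrt (a * c) with hg'
  have hg : 0 < g := Real.sqrt_pos.mpr (by positivity)
  have hg2 : g ^ 2 = a * c := Real.sq_sqrt (by positivity)
  set Z : ℝ := 1 - (Real.sqrt c - Real.sqrt a) ^ 2 with hZ'
  have hsqrt : Real.sqrt a * Real.sqrt c = g := (Real.sqrt_mul ha.le c).symm
  have hZeq : Z = 1 - a - c + 2 * g := by
    have h1 : Real.sqrt a ^ 2 = a := Real.sq_sqrt ha.le
    have h2 : Real.sqrt c ^ 2 = c := Real.sq_sqrt hc.le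
    rw [hZ']; nlinarith [h1, h2, hsqrt]
  have hmemi : i ∈ Finset.range n := by simp [hn]; omega
  have hmemi1 : i + 1 ∈ Finset.range n := by simp [hn]; omega
  have hii1 : i ≠ i + 1 := by omega
  have hac_le : a + c ≤ 1 := by
    have hsub : ({i, i + 1} : Finset ℕ) ⊆ Finset.range n := by
      intro k hk; simp at hk; rcases hk with h | h <;> simp [hn] <;> omega
    have := Finset.sum_le_sum_of_subset_of_nonneg hsub
      (fun k hk _ => (hp_pos k (by simp [hn] at hk; omega)).le)
    rw [Finset.sum_pair hii1, hp_sum] at this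
    exact this
  have hZpos : 0 < Z := by
    rw [hZeq]; nlinarith
  have hZne : Z ≠ 0 := hZpos.ne'
  -- the minimizer
  set q0 : ℕ → ℝ := fun k => (if k = i then g else if k = i + 1 then g else p k) / Z with hq0'
  have hq0pos : ∀ k ≤ 2 * b, 0 < q0 k := by
    intro k hk
    rw [hq0']
    by_cases h1 : k = i
    · simp [h1, hii1]; positivity
    · by_cases h2 : k = i + 1
      · simp [h1, h2]; positivity
      · simp [h1, h2]; exact div_pos (hp_pos k hk) hZpos
  have hq0sum : ∑ k ∈ Finset.range n, q0 k = 1 := by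
    have hpt : ∀ k, (if k = i then g else if k = i + 1 then g else p k)
        = p k + (if k = i then g - a else if k = i + 1 then g - c else 0) := by
      intro k
      by_cases h1 : k = i
      · subst h1; simp [hii1, ha']
      · by_cases h2 : k = i + 1
        · subst h2; simp [h1, hc']
        · simp [h1, h2]
    have hnum : ∑ k ∈ Finset.range n, (if k = i then g else if k = i + 1 then g else p k) = Z := by
      rw [Finset.sum_congr rfl (fun k _ => hpt k), Finset.sum_add_distrib, hp_sum,
        sum_two_spikes hii1 hmemi hmemi1 (g - a) (g - c), hZeq]
      ring
    rw [hq0', ← Finset.sum_div, hnum, div_self hZne]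
  have hgapos : 0 < g / a := by positivity
  have hgcpos : 0 < g / c := by positivity
  have hLprod : g / a * (g / c) = 1 := by
    field_simp
    nlinarith [hg2]
  have hL0 : Real.logb 2 (g / a) + Real.logb 2 (g / c) = 0 := by
    rw [← Real.logb_mul hgapos.ne' hgcpos.ne', hLprod, Real.logb_one]
  set L : ℝ := Real.logb 2 (g / a) with hL'
  have hLnn : 0 ≤ L := by
    apply Real.logb_nonneg one_lt_two
    rw [le_div_iff₀ ha]
    nlinarith [hg2, ha, hc, hlt, hg]
  -- value of KL at q0
  have hKL0 : KL b q0 p = Real.logb 2 (1 / Z) := by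
    have hterm : ∀ k ∈ Finset.range n,
        (if q0 k = 0 then 0 else q0 k * Real.logb 2 (q0 k / p k))
        = q0 k * Real.logb 2 (1 / Z) +
          (if k = i then g / Z * Real.logb 2 (g / a)
           else if k = i + 1 then g / Z * Real.logb 2 (g / c) else 0) := by
      intro k hk
      have hk' : k ≤ 2 * b := by simp [hn] at hk; omega
      have hq0k : q0 k ≠ 0 := (hq0pos k hk').ne'
      rw [if_neg hq0k]
      by_cases h1 : k = i
      · have e : q0 k = g / Z := by simp [hq0', h1]
        have epk : p k = a := by rw [h1]
        have hratio : g / Z / a = 1 / Z * (g / a) := by field_simp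
        rw [if_pos h1, e, epk, hratio, Real.logb_mul (by positivity) (by positivity)]
        ring
      · by_cases h2 : k = i + 1
        · have e : q0 k = g / Z := by simp [hq0', h1, h2]
          have epk : p k = c := by rw [h2]
          have hratio : g / Z / c = 1 / Z * (g / c) := by field_simp
          rw [if_neg h1, if_pos h2, e, epk, hratio,
            Real.logb_mul (by positivity) (by positivity)]
          ring
        · have hq0e : q0 k = p k / Z := by simp [hq0', h1, h2]
          have hpk : 0 < p k := hp_pos k hk'
          have hratio : p k / Z / p k = 1 / Z := by
            rw [div_right_comm, div_self hpk.ne']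
          rw [if_neg h1, if_neg h2, hq0e, hratio]
          ring
    rw [KL, ← hn, Finset.sum_congr rfl hterm, Finset.sum_add_distrib, ← Finset.sum_mul,
      hq0sum, sum_two_spikes hii1 hmemi hmemi1 _ _]
    have : g / Z * Real.logb 2 (g / a) + g / Z * Real.logb 2 (g / c) = 0 := by
      rw [← mul_add, hL0, mul_zero]
    rw [this]; ring
  have hgoal : Real.logb 2 (1 / (1 - (Real.sqrt (p (i + 1)) - Real.sqrt (p i)) ^ 2))
      = Real.logb 2 (1 / Z) := by rw [hZ', ← ha', ← hc']
  constructor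
  · -- membership
    rw [hgoal]
    refine ⟨q0, fun k hk => (hq0pos k hk).le, hq0sum, ?_, hKL0.symm⟩
    have e1 : q0 (i + 1) = g / Z := by simp [hq0', hii1.symm, (by omega : i + 1 ≠ i)]
    have e2 : q0 i = g / Z := by simp [hq0']
    rw [e1, e2]
  · -- lower bound
    rintro D ⟨q, hqnn, hqsum, hqle, rfl⟩
    rw [hgoal]
    have hlog2 : (0:ℝ) < Real.log 2 := Real.log_pos one_lt_two
    have hstep : ∀ k ∈ Finset.range n,
        (q k - q0 k) / Real.log 2 + q k * Real.logb 2 (q0 k / p k)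
        ≤ (if q k = 0 then 0 else q k * Real.logb 2 (q k / p k)) := by
      intro k hk
      have hk' : k ≤ 2 * b := by simp [hn] at hk; omega
      have hq0k : 0 < q0 k := hq0pos k hk'
      have hpk : 0 < p k := hp_pos k hk'
      by_cases hq : q k = 0
      · rw [if_pos hq, hq]
        have : (0 - q0 k) / Real.log 2 ≤ 0 := by
          apply div_nonpos_of_nonpos_of_nonneg <;> nlinarith
        simpa using this
      · rw [if_neg hq]
        have hqk : 0 < q k := lt_of_le_of_ne (hqnn k hk') (Ne.symm hq)
        have hsplit : Real.logb 2 (q k / p k)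
            = Real.logb 2 (q k / q0 k) + Real.logb 2 (q0 k / p k) := by
          rw [← Real.logb_mul (by positivity) (by positivity)]
          congr 1; field_simp
        rw [hsplit, mul_add]
        have h1 : Real.log (q0 k / q k) ≤ q0 k / q k - 1 :=
          Real.log_le_sub_one_of_pos (by positivity)
        have h2 : Real.log (q k / q0 k) = - Real.log (q0 k / q k) := by
          rw [← Real.log_inv]; congr 1; rw [inv_div]
        have h3 : (q k - q0 k) / Real.log 2 ≤ q k * Real.logb 2 (q k / q0 k) := by
          rw [Real.logb, h2, div_le_iff₀ hlog2]
          have heq : q k * (-Real.log (q0 k / q k) / Real.log 2) * Real.log 2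
              = q k * (-Real.log (q0 k / q k)) := by field_simp
          have hmul : q k * (q0 k / q k - 1) = q0 k - q k := by field_simp
          have h4 := mul_le_mul_of_nonneg_left h1 hqk.le
          rw [heq]
          linarith [h4, hmul]
        linarith
    have hsum1 : ∑ k ∈ Finset.range n, (q k - q0 k) / Real.log 2 = 0 := by
      rw [← Finset.sum_div, Finset.sum_sub_distrib, hqsum, hq0sum, sub_self, zero_div]
    have hS : ∑ k ∈ Finset.range n, q k * Real.logb 2 (q0 k / p k)
        = Real.logb 2 (1 / Z) + (q i * L + q (i + 1) * (-L)) := by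
      have hterm : ∀ k ∈ Finset.range n,
          q k * Real.logb 2 (q0 k / p k)
          = q k * Real.logb 2 (1 / Z) +
            (if k = i then q i * L else if k = i + 1 then q (i + 1) * (-L) else 0) := by
        intro k hk
        have hk' : k ≤ 2 * b := by simp [hn] at hk; omega
        by_cases h1 : k = i
        · have e : q0 k = g / Z := by simp [hq0', h1]
          have epk : p k = a := by rw [h1]
          have eqk : q k = q i := by rw [h1]
          have hratio : g / Z / a = 1 / Z * (g / a) := by field_simp
          rw [e, epk, eqk, hratio, Real.logb_mul (by positivity) (by positivity), if_pos h1,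
            hL']
          ring
        · by_cases h2 : k = i + 1
          · have e : q0 k = g / Z := by simp [hq0', h1, h2]
            have epk : p k = c := by rw [h2]
            have eqk : q k = q (i + 1) := by rw [h2]
            have hratio : g / Z / c = 1 / Z * (g / c) := by field_simp
            have hLc : Real.logb 2 (g / c) = -L := by rw [hL']; linarith [hL0]
            rw [e, epk, eqk, hratio, Real.logb_mul (by positivity) (by positivity), hLc,
              if_neg h1, if_pos h2]
            ring
          · have e : q0 k = p k / Z := by simp [hq0', h1, h2]
            have hpk : 0 < p k := hp_pos k hk'
            have hratio : p k / Z / p k = 1 / Z := by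
              rw [div_right_comm, div_self hpk.ne']
            rw [e, hratio, if_neg h1, if_neg h2]
            ring
      rw [Finset.sum_congr rfl hterm, Finset.sum_add_distrib, ← Finset.sum_mul, hqsum,
        sum_two_spikes hii1 hmemi hmemi1 _ _]
      ring
    have hfinal : Real.logb 2 (1 / Z) + (q i * L + q (i + 1) * (-L)) ≤ KL b q p := by
      calc Real.logb 2 (1 / Z) + (q i * L + q (i + 1) * (-L))
          = ∑ k ∈ Finset.range n, ((q k - q0 k) / Real.log 2 + q k * Real.logb 2 (q0 k / p k)) := by
            rw [Finset.sum_add_distrib, hsum1, hS]; ring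
        _ ≤ _ := Finset.sum_le_sum hstep
    have : 0 ≤ q i * L + q (i + 1) * (-L) := by nlinarith [hqnn i (by omega), hqle, hLnn]
    linarith
end

section
/- Let b ≥ 1 be an integer, let p = (p_0, …, p_{2b}) be a probability vector with all entries positive, fix an index i with 0 ≤ i ≤ 2b−1, and set Z = 1 − (√p_{i+1} − √p_i)². Define q* by q*_i = q*_{i+1} = √(p_i p_{i+1})/Z and q*_k = p_k/Z for k ∉ {i, i+1}. Then q* is a probability vector (nonnegative entries summing to 1), it satisfies q*_{i+1} ≤ q*_i, and D(q* ∥ p) = Σ_{k=0}^{2b} q*_k log₂(q*_k/p_k) = log₂(1/Z). -/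
open Finset Real

theorem kl_of_optimal_tilted_distribution (b : ℕ) (hb : 1 ≤ b) (p : ℕ → ℝ)
    (hp_pos : ∀ k ≤ 2 * b, 0 < p k)
    (hp_sum : ∑ k ∈ Finset.range (2 * b + 1), p k = 1)
    (i : ℕ) (hi : i + 1 ≤ 2 * b)
    (Z : ℝ) (hZ : Z = 1 - (Real.sqrt (p (i + 1)) - Real.sqrt (p i)) ^ 2)
    (qstar : ℕ → ℝ)
    (hq : ∀ k ≤ 2 * b, qstar k =
      if k = i ∨ k = i + 1 then Real.sqrt (p i * p (i + 1)) / Z else p k / Z) :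
    (∀ k ≤ 2 * b, 0 ≤ qstar k) ∧
    (∑ k ∈ Finset.range (2 * b + 1), qstar k = 1) ∧
    qstar (i + 1) ≤ qstar i ∧
    KL b qstar p = Real.logb 2 (1 / Z) := by
  set a := p i with ha_def
  set c := p (i + 1) with hc_def
  have ha : 0 < a := hp_pos i (by omega)
  have hc : 0 < c := hp_pos (i + 1) hi
  set s := Real.sqrt (a * c) with hs_def
  have hs : 0 < s := Real.sqrt_pos.mpr (mul_pos ha hc)
  have hs2 : s ^ 2 = a * c := Real.sq_sqrt (mul_pos ha hc).le
  have hZ' : Z = (1 - a - c) + 2 * s := by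
    have h1 : Real.sqrt c * Real.sqrt a = s := by
      rw [← Real.sqrt_mul hc.le, mul_comm]
    rw [hZ, sub_sq, Real.sq_sqrt hc.le, Real.sq_sqrt ha.le]; linear_combination 2 * h1
  -- set/finset facts
  set T := Finset.range (2 * b + 1) with hT_def
  have hne : i ≠ i + 1 := by omega
  have hsub : ({i, i + 1} : Finset ℕ) ⊆ T := by
    intro k hk
    simp only [Finset.mem_insert, Finset.mem_singleton] at hk
    simp only [hT_def, Finset.mem_range]; omega
  have hsplit : ∀ f : ℕ → ℝ,
      (∑ k ∈ T, f k) = (∑ k ∈ T \ {i, i + 1}, f k) + (f i + f (i + 1)) := by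
    intro f
    rw [← Finset.sum_pair hne, Finset.sum_sdiff hsub]
  have hrest_mem : ∀ k ∈ T \ ({i, i + 1} : Finset ℕ),
      k ≤ 2 * b ∧ k ≠ i ∧ k ≠ i + 1 := by
    intro k hk
    simp only [Finset.mem_sdiff, Finset.mem_insert, Finset.mem_singleton, hT_def,
      Finset.mem_range] at hk
    omega
  have hrest_sum : ∑ k ∈ T \ {i, i + 1}, p k = 1 - a - c := by
    have := hsplit p
    rw [hp_sum] at this
    linarith
  have hrest_nonneg : 0 ≤ 1 - a - c := by
    rw [← hrest_sum]
    exact Finset.sum_nonneg fun k hk => (hp_pos k (hrest_mem k hk).1).le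
  have hZpos : 0 < Z := by rw [hZ']; linarith
  have hqi : qstar i = s / Z := by
    rw [hq i (by omega)]; simp
  have hqi1 : qstar (i + 1) = s / Z := by
    rw [hq (i + 1) hi]; simp
  have hqrest : ∀ k ∈ T \ ({i, i + 1} : Finset ℕ), qstar k = p k / Z := by
    intro k hk
    obtain ⟨h1, h2, h3⟩ := hrest_mem k hk
    rw [hq k h1, if_neg (by tauto)]
  have hqpos : ∀ k ≤ 2 * b, 0 < qstar k := by
    intro k hk
    rw [hq k hk]
    split
    · exact div_pos hs hZpos
    · exact div_pos (hp_pos k hk) hZpos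
  refine ⟨fun k hk => (hqpos k hk).le, ?_, le_of_eq (hqi1.trans hqi.symm), ?_⟩
  · rw [hsplit qstar, Finset.sum_congr rfl hqrest, hqi, hqi1, ← Finset.sum_div,
      hrest_sum]
    field_simp
    linarith [hZ']
  · set L := Real.logb 2 (1 / Z) with hL_def
    have hterm_rest : ∀ k ∈ T \ ({i, i + 1} : Finset ℕ),
        (if qstar k = 0 then 0 else qstar k * Real.logb 2 (qstar k / p k))
          = (p k / Z) * L := by
      intro k hk
      obtain ⟨h1, _, _⟩ := hrest_mem k hk
      have hpk := hp_pos k h1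
      rw [if_neg (hqpos k h1).ne', hqrest k hk]
      congr 1
      rw [hL_def]
      congr 1
      field_simp
    have hterm_i : ∀ k, k = i ∨ k = i + 1 →
        (if qstar k = 0 then 0 else qstar k * Real.logb 2 (qstar k / p k))
          = (s / Z) * Real.logb 2 (s / (Z * p k)) := by
      intro k hk
      have hk2 : k ≤ 2 * b := by rcases hk with h | h <;> omega
      have hq' : qstar k = s / Z := by rw [hq k hk2, if_pos hk]
      rw [if_neg (hqpos k hk2).ne', hq']
      congr 1
      rw [div_div]
    have hKL : KL b qstar p
        = (∑ k ∈ T \ {i, i + 1}, (p k / Z) * L)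
          + ((s / Z) * Real.logb 2 (s / (Z * a)) + (s / Z) * Real.logb 2 (s / (Z * c))) := by
      rw [KL, hsplit, Finset.sum_congr rfl hterm_rest,
        hterm_i i (Or.inl rfl), hterm_i (i + 1) (Or.inr rfl)]
    have hlog2 : Real.logb 2 (s / (Z * a)) + Real.logb 2 (s / (Z * c)) = 2 * L := by
      rw [← Real.logb_mul (by positivity) (by positivity)]
      have : s / (Z * a) * (s / (Z * c)) = (1 / Z) ^ 2 := by
        field_simp
        nlinarith [hs2]
      rw [this, Real.logb_pow]
      push_cast
      ring
    rw [hKL, ← Finset.sum_mul, ← Finset.sum_div, hrest_sum]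
    have : (s / Z) * Real.logb 2 (s / (Z * a)) + (s / Z) * Real.logb 2 (s / (Z * c))
        = (s / Z) * (2 * L) := by rw [← hlog2]; ring
    rw [this]
    have h2 : (1 - a - c) / Z * L + s / Z * (2 * L) = ((1 - a - c) + 2 * s) / Z * L := by
      ring
    rw [h2, ← hZ', div_self hZpos.ne', one_mul]
end

section
/- Let b ≥ 1 be an integer, let p = (p_0, …, p_{2b}) be a probability vector with all entries positive, and let X_1, …, X_n be i.i.d. random variables with P(X_j = k) = p_k for 0 ≤ k ≤ 2b. Let N_k = #{ j : 1 ≤ j ≤ n, X_j = k } denote the count of samples equal to k. Then for every index i with 0 ≤ i ≤ 2b−1 such that p_i < p_{i+1}, one has P(N_i ≥ N_{i+1}) ≤ (1 − (√p_{i+1} − √p_i)²)^n. -/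
/-!
Chernoff bound. For `t ≥ 1` the event `{N_{i+1} ≤ N_i}` forces `1 ≤ t ^ N_i * t⁻¹ ^ N_{i+1}`,
a product of one factor per sample; by Markov's inequality and independence its probability is at
most `(t p_i + t⁻¹ p_{i+1} + 1 - p_i - p_{i+1}) ^ n`. The choice `t = √(p_{i+1} / p_i)` turns the
base into `1 - (√p_{i+1} - √p_i) ^ 2`; when `p_i = 0` this value is the limit as `t → ∞`.
-/

open Finset Real MeasureTheory ProbabilityTheory Filter Topology

lemma le_one_sub_sq_sqrt_sub_sqrt_pow_of_forall {x p q : ℝ} (n : ℕ) (hp : 0 ≤ p) (hpq : p ≤ q)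
    (h : ∀ t, 1 ≤ t → x ≤ (t * p + t⁻¹ * q + (1 - p - q)) ^ n) :
    x ≤ (1 - (√q - √p) ^ 2) ^ n := by
  obtain ⟨a, ha, rfl⟩ : ∃ a, 0 ≤ a ∧ a ^ 2 = p := ⟨√p, sqrt_nonneg p, sq_sqrt hp⟩
  obtain ⟨c, hc, rfl⟩ : ∃ c, 0 ≤ c ∧ c ^ 2 = q := ⟨√q, sqrt_nonneg q, sq_sqrt (hp.trans hpq)⟩
  rw [sqrt_sq ha, sqrt_sq hc]
  rcases ha.eq_or_lt with rfl | ha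
  · have hlim : Tendsto (fun t : ℝ => (t * 0 ^ 2 + t⁻¹ * c ^ 2 + (1 - 0 ^ 2 - c ^ 2)) ^ n)
        atTop (𝓝 ((1 - (c - 0) ^ 2) ^ n)) := by
      simpa using ((tendsto_inv_atTop_zero.mul_const (c ^ 2)).add_const (1 - c ^ 2)).pow n
    exact ge_of_tendsto hlim ((eventually_ge_atTop 1).mono h)
  · have hac : a ≤ c := (pow_le_pow_iff_left₀ ha.le hc two_ne_zero).1 hpq
    refine (h (c / a) ((one_le_div ha).2 hac)).trans_eq ?_
    congr 1
    field_simp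
    ring

lemma measureReal_eq_add_measureReal_eq_le_one {Ω α : Type*} [MeasurableSpace Ω]
    {μ : Measure Ω} [IsProbabilityMeasure μ] [MeasurableSpace α] [MeasurableSingletonClass α]
    {Y : Ω → α} (hY : Measurable Y) {u v : α} (huv : u ≠ v) :
    μ.real {ω | Y ω = u} + μ.real {ω | Y ω = v} ≤ 1 := by
  have hdisj : Disjoint {ω | Y ω = u} {ω | Y ω = v} :=
    (Set.disjoint_singleton.2 huv).preimage Y
  rw [← measureReal_union hdisj (hY (measurableSet_singleton v))]
  exact measureReal_le_one

def pairWeight {α M : Type*} [DecidableEq α] [One M] (u v : α) (a c : M) (k : α) : M :=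
  if k = u then a else if k = v then c else 1

section pairWeight

variable {α M : Type*} [DecidableEq α] {u v : α}

lemma prod_pairWeight {ι : Type*} [CommMonoid M] (s : Finset ι) (f : ι → α) (huv : u ≠ v)
    (a c : M) :
    ∏ j ∈ s, pairWeight u v a c (f j) = a ^ #{j ∈ s | f j = u} * c ^ #{j ∈ s | f j = v} := by
  have hsplit : ∀ j, pairWeight u v a c (f j) =
      (if f j = u then a else 1) * (if f j = v then c else 1) := by
    intro j
    by_cases hu : f j = u
    · simp [pairWeight, hu, huv]
    · simp [pairWeight, hu]
  simp only [hsplit, prod_mul_distrib, prod_ite, prod_const, one_pow, mul_one]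

variable [MeasurableSpace α] [MeasurableSingletonClass α]

@[fun_prop]
lemma measurable_pairWeight [One M] [MeasurableSpace M] (a c : M) :
    Measurable (pairWeight u v a c) :=
  .ite (measurableSet_singleton u) measurable_const
    (.ite (measurableSet_singleton v) measurable_const measurable_const)

variable {Ω : Type*} [MeasurableSpace Ω] {μ : Measure Ω} [IsProbabilityMeasure μ]

lemma lintegral_pairWeight_ofReal_comp {Y : Ω → α} (hY : Measurable Y) (huv : u ≠ v)
    {s r : ℝ} (hs : 0 ≤ s) (hr : 0 ≤ r) :
    ∫⁻ ω, pairWeight u v (ENNReal.ofReal s) (ENNReal.ofReal r) (Y ω) ∂μ =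
      ENNReal.ofReal (s * μ.real {ω | Y ω = u} + r * μ.real {ω | Y ω = v} +
        (1 - μ.real {ω | Y ω = u} - μ.real {ω | Y ω = v})) := by
  set A := {ω | Y ω = u}
  set B := {ω | Y ω = v}
  have hA : MeasurableSet A := hY (measurableSet_singleton u)
  have hB : MeasurableSet B := hY (measurableSet_singleton v)
  have hdisj : Disjoint A B := (Set.disjoint_singleton.2 huv).preimage Y
  have hsplit : ∀ ω, pairWeight u v (ENNReal.ofReal s) (ENNReal.ofReal r) (Y ω) =
      A.indicator (fun _ => ENNReal.ofReal s) ω + B.indicator (fun _ => ENNReal.ofReal r) ω +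
        (A ∪ B)ᶜ.indicator 1 ω := by
    intro ω
    by_cases hu : Y ω = u
    · simp [pairWeight, A, B, hu, huv]
    · by_cases hv : Y ω = v <;> simp [pairWeight, A, B, hu, hv, huv.symm]
  have hcompl : 1 - μ.real A - μ.real B = μ.real (A ∪ B)ᶜ := by
    rw [probReal_compl_eq_one_sub (hA.union hB), measureReal_union hdisj hB]
    ring
  simp_rw [hsplit]
  rw [lintegral_add_left (by fun_prop), lintegral_add_left (by fun_prop),
    lintegral_indicator_const hA, lintegral_indicator_const hB,
    lintegral_indicator_one (hA.union hB).compl, hcompl,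
    ENNReal.ofReal_add (by positivity) (by positivity),
    ENNReal.ofReal_add (by positivity) (by positivity), ENNReal.ofReal_mul hs,
    ENNReal.ofReal_mul hr, ofReal_measureReal, ofReal_measureReal, ofReal_measureReal]

variable {ι : Type*} [Fintype ι] {X : ι → Ω → α} {p q : ℝ}

lemma lintegral_prod_pairWeight_ofReal_comp (hX : ∀ j, Measurable (X j))
    (hindep : iIndepFun X μ) (huv : u ≠ v) (hu : ∀ j, μ.real {ω | X j ω = u} = p)
    (hv : ∀ j, μ.real {ω | X j ω = v} = q) {s r : ℝ} (hs : 0 ≤ s) (hr : 0 ≤ r) :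
    ∫⁻ ω, ∏ j, pairWeight u v (ENNReal.ofReal s) (ENNReal.ofReal r) (X j ω) ∂μ =
      ENNReal.ofReal (s * p + r * q + (1 - p - q)) ^ Fintype.card ι := by
  rw [lintegral_prod_eq_prod_lintegral_of_indepFun univ
    (fun j ω => pairWeight u v (ENNReal.ofReal s) (ENNReal.ofReal r) (X j ω))
    (hindep.comp _ fun _ => measurable_pairWeight _ _) fun j => by fun_prop]
  simp_rw [lintegral_pairWeight_ofReal_comp (hX _) huv hs hr, hu, hv]
  simp

lemma measureReal_card_le_card_le_pow (hX : ∀ j, Measurable (X j)) (hindep : iIndepFun X μ)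
    (huv : u ≠ v) (hu : ∀ j, μ.real {ω | X j ω = u} = p)
    (hv : ∀ j, μ.real {ω | X j ω = v} = q) {t : ℝ} (ht : 1 ≤ t) :
    μ.real {ω | #{j | X j ω = v} ≤ #{j | X j ω = u}} ≤
      (t * p + t⁻¹ * q + (1 - p - q)) ^ Fintype.card ι := by
  rcases isEmpty_or_nonempty ι with _ | ⟨⟨j₀⟩⟩
  · simp
  have ht₀ : 0 < t := zero_lt_one.trans_le ht
  have hbase : 0 ≤ t * p + t⁻¹ * q + (1 - p - q) := by
    have hp : 0 ≤ p := hu j₀ ▸ measureReal_nonneg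
    have hq : 0 ≤ q := hv j₀ ▸ measureReal_nonneg
    have hpq : 0 ≤ 1 - p - q := by
      linarith [hu j₀ ▸ hv j₀ ▸ measureReal_eq_add_measureReal_eq_le_one (μ := μ) (hX j₀) huv]
    positivity
  set F : Ω → ENNReal := fun ω =>
    ∏ j, pairWeight u v (ENNReal.ofReal t) (ENNReal.ofReal t⁻¹) (X j ω)
  have hsub : {ω | #{j | X j ω = v} ≤ #{j | X j ω = u}} ⊆ {ω | 1 ≤ F ω} := by
    intro ω hω
    simp only [Set.mem_ofPred_eq, F, prod_pairWeight _ _ huv,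
      ← ENNReal.ofReal_pow ht₀.le, ← ENNReal.ofReal_pow (inv_nonneg.2 ht₀.le),
      ← ENNReal.ofReal_mul (pow_nonneg ht₀.le _), ENNReal.one_le_ofReal, inv_pow]
    rw [← div_eq_mul_inv, one_le_div (by positivity)]
    exact pow_le_pow_right₀ ht hω
  have hmarkov : μ {ω | 1 ≤ F ω} ≤ ∫⁻ ω, F ω ∂μ := by
    simpa using mul_meas_ge_le_lintegral₀ (μ := μ) (f := F) (by fun_prop) 1
  calc μ.real {ω | #{j | X j ω = v} ≤ #{j | X j ω = u}}
      ≤ (ENNReal.ofReal (t * p + t⁻¹ * q + (1 - p - q)) ^ Fintype.card ι).toReal := by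
        refine ENNReal.toReal_mono (by finiteness) ((measure_mono hsub).trans (hmarkov.trans_eq ?_))
        exact lintegral_prod_pairWeight_ofReal_comp hX hindep huv hu hv ht₀.le (inv_nonneg.2 ht₀.le)
    _ = (t * p + t⁻¹ * q + (1 - p - q)) ^ Fintype.card ι := by
        rw [ENNReal.toReal_pow, ENNReal.toReal_ofReal hbase]

end pairWeight

theorem type_ordering_error_bound_general (b n : ℕ) (p : ℕ → ℝ)
    (hp_nonneg : ∀ k ≤ 2 * b, 0 ≤ p k)
    {Ω : Type*} [MeasurableSpace Ω] (μ : Measure Ω) [IsProbabilityMeasure μ]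
    (X : Fin n → Ω → ℕ) (hXmeas : ∀ j, Measurable (X j))
    (hXindep : iIndepFun X μ)
    (hXdist : ∀ j, ∀ k ≤ 2 * b, μ {ω | X j ω = k} = ENNReal.ofReal (p k))
    (N : ℕ → Ω → ℕ)
    (hN : ∀ k ω, N k ω = (Finset.univ.filter fun j : Fin n => X j ω = k).card)
    (i : ℕ) (hi : i + 1 ≤ 2 * b) (hlt : p i < p (i + 1)) :
    (μ {ω | N (i + 1) ω ≤ N i ω}).toReal ≤
      (1 - (Real.sqrt (p (i + 1)) - Real.sqrt (p i)) ^ 2) ^ n := by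
  have hdist : ∀ k ≤ 2 * b, ∀ j, μ.real {ω | X j ω = k} = p k := fun k hk j => by
    rw [measureReal_def, hXdist j k hk, ENNReal.toReal_ofReal (hp_nonneg k hk)]
  rw [← measureReal_def]
  simp_rw [hN]
  refine le_one_sub_sq_sqrt_sub_sqrt_pow_of_forall n (hp_nonneg i (by omega)) hlt.le fun t ht => ?_
  simpa using measureReal_card_le_card_le_pow hXmeas hXindep (Nat.succ_ne_self i).symm
    (hdist i (by omega)) (hdist (i + 1) hi) ht

theorem type_ordering_error_bound (b n : ℕ) (hb : 1 ≤ b) (p : ℕ → ℝ)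
    (hp_nonneg : ∀ k ≤ 2 * b, 0 ≤ p k)
    (hp_sum : ∑ k ∈ Finset.range (2 * b + 1), p k = 1)
    {Ω : Type*} [MeasurableSpace Ω] (μ : Measure Ω) [IsProbabilityMeasure μ]
    (X : Fin n → Ω → ℕ) (hXmeas : ∀ j, Measurable (X j))
    (hXindep : iIndepFun X μ)
    (hXdist : ∀ j, ∀ k ≤ 2 * b, μ {ω | X j ω = k} = ENNReal.ofReal (p k))
    (N : ℕ → Ω → ℕ)
    (hN : ∀ k ω, N k ω = (Finset.univ.filter fun j : Fin n => X j ω = k).card)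
    (i : ℕ) (hi : i + 1 ≤ 2 * b) (hlt : p i < p (i + 1)) :
    (μ {ω | N (i + 1) ω ≤ N i ω}).toReal ≤
      (1 - (Real.sqrt (p (i + 1)) - Real.sqrt (p i)) ^ 2) ^ n :=
  type_ordering_error_bound_general b n p hp_nonneg μ X hXmeas hXindep hXdist N hN i hi hlt
end

section
/- Let b ≥ 1 be an integer, let p be a sensor-deployment distribution, let X_1, …, X_n be i.i.d. random variables with P(X_j = k) = p_k, let N_k be the count of samples equal to k, and let e_n = P( ¬(0 < N_0 < N_1 < … < N_{2b}) ). Then e_n ≤ (2b+1) · (1 − d_min(p)²)^n. -/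
open Finset Real MeasureTheory ProbabilityTheory

/-!
The error event lies in `{N₀ = 0} ∪ ⋃_{k=1}^{2b} {N_k ≤ N_{k-1}}`. By independence the first event has
probability `(1 - p₀)^n = (1 - d₀²)^n`. For the others, `N_{k-1} - N_k` is a sum of `n` independent
copies of `1[X = k-1] - 1[X = k]`; the Chernoff bound at `eᵗ = √(p_k / p_{k-1})` gives
`P(N_k ≤ N_{k-1}) ≤ (p_{k-1} eᵗ + p_k e⁻ᵗ + 1 - p_{k-1} - p_k)^n = (1 - d_k²)^n`. A union bound over
the `2b + 1` events concludes, since every `d_k ≥ d_min > 0`.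
-/

section Counts

variable {Ω ι α : Type*} [DecidableEq α]

lemma exp_mul_ite_sub_ite {u v : α} (huv : u ≠ v) (t : ℝ) (Z : Ω → α) :
    (fun ω => exp (t * ((if Z ω = u then 1 else 0) - if Z ω = v then 1 else 0))) =
      fun ω => 1 + {ω | Z ω = u}.indicator (fun _ => exp t - 1) ω
        + {ω | Z ω = v}.indicator (fun _ => exp (-t) - 1) ω := by
  funext ω
  by_cases hu : Z ω = u
  · simp [hu, huv]
  · by_cases hv : Z ω = v <;> simp [hu, hv, huv.symm]

variable [MeasurableSpace Ω] {μ : Measure Ω} [IsProbabilityMeasure μ]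
  [MeasurableSpace α] [MeasurableSingletonClass α]

lemma integrable_exp_mul_ite_sub_ite {Z : Ω → α} (hZ : Measurable Z) {u v : α} (huv : u ≠ v)
    (t : ℝ) :
    Integrable (fun ω => exp (t * ((if Z ω = u then 1 else 0) - if Z ω = v then 1 else 0))) μ := by
  rw [exp_mul_ite_sub_ite huv]
  exact ((integrable_const 1).add
    ((integrable_const _).indicator (hZ (measurableSet_singleton u)))).add
    ((integrable_const _).indicator (hZ (measurableSet_singleton v)))

lemma mgf_ite_sub_ite {Z : Ω → α} (hZ : Measurable Z) {u v : α} (huv : u ≠ v) (t : ℝ) :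
    mgf (fun ω => (if Z ω = u then 1 else 0) - if Z ω = v then 1 else 0) μ t =
      1 + (exp t - 1) * μ.real {ω | Z ω = u} + (exp (-t) - 1) * μ.real {ω | Z ω = v} := by
  have hu : MeasurableSet {ω | Z ω = u} := hZ (measurableSet_singleton u)
  have hv : MeasurableSet {ω | Z ω = v} := hZ (measurableSet_singleton v)
  rw [mgf, exp_mul_ite_sub_ite huv, integral_add ((integrable_const 1).add
      ((integrable_const _).indicator hu)) ((integrable_const _).indicator hv),
    integral_add (integrable_const 1) ((integrable_const _).indicator hu),
    integral_indicator_const _ hu, integral_indicator_const _ hv]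
  simp only [integral_const, probReal_univ, smul_eq_mul, one_mul]
  ring

variable [Fintype ι]

lemma measureReal_card_filter_eq_zero {X : ι → Ω → α} (hX : ∀ j, Measurable (X j))
    (hindep : iIndepFun X μ) {u : α} {q : ℝ} (hq : ∀ j, μ.real {ω | X j ω = u} = q) :
    μ.real {ω | #{j | X j ω = u} = 0} = (1 - q) ^ Fintype.card ι := by
  have hset : {ω | #{j | X j ω = u} = 0} = ⋂ j, X j ⁻¹' {u}ᶜ := by
    ext ω
    simp [Finset.filter_eq_empty_iff]
  rw [hset, measureReal_def,
    hindep.meas_iInter fun _ => ⟨{u}ᶜ, (measurableSet_singleton u).compl, rfl⟩, ENNReal.toReal_prod]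
  have hcompl : ∀ j, (μ (X j ⁻¹' {u}ᶜ)).toReal = 1 - q := fun j => by
    rw [← measureReal_def, Set.preimage_compl, measureReal_compl (hX j (measurableSet_singleton u)),
      probReal_univ, ← hq j]
    rfl
  rw [Finset.prod_congr rfl fun j _ => hcompl j, prod_const, card_univ]

lemma measureReal_card_filter_le_card_filter_le {X : ι → Ω → α} (hX : ∀ j, Measurable (X j))
    (hindep : iIndepFun X μ) {u v : α} (huv : u ≠ v) {q r : ℝ} (hq : 0 < q) (hqr : q ≤ r)
    (hu : ∀ j, μ.real {ω | X j ω = u} = q) (hv : ∀ j, μ.real {ω | X j ω = v} = r) :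
    μ.real {ω | #{j | X j ω = v} ≤ #{j | X j ω = u}} ≤ (1 - (√r - √q) ^ 2) ^ Fintype.card ι := by
  set g : α → ℝ := fun a => (if a = u then 1 else 0) - if a = v then 1 else 0
  have hg : Measurable g := (measurable_const.ite (measurableSet_singleton u) measurable_const).sub
    (measurable_const.ite (measurableSet_singleton v) measurable_const)
  set Y : ι → Ω → ℝ := fun j ω => g (X j ω)
  have hYmeas : ∀ j, Measurable (Y j) := fun j => hg.comp (hX j)
  have hYindep : iIndepFun Y μ := hindep.comp (fun _ => g) fun _ => hg
  have hsum : ∀ ω, (∑ j, Y j) ω = #{j | X j ω = u} - #{j | X j ω = v} := fun ω => by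
    simp only [Y, g, Finset.sum_apply, sum_sub_distrib, sum_boole]
  have hsq : 0 < √q := sqrt_pos.2 hq
  have hsr : 0 < √r := sqrt_pos.2 (hq.trans_le hqr)
  set t := log (√r / √q)
  have ht : 0 ≤ t := log_nonneg ((one_le_div hsq).2 (sqrt_le_sqrt hqr))
  have hexp : exp t = √r / √q := exp_log (div_pos hsr hsq)
  have hexp_neg : exp (-t) = √q / √r := by rw [exp_neg, hexp, inv_div]
  have hmgf : ∀ j, mgf (Y j) μ t = 1 - (√r - √q) ^ 2 := fun j => by
    rw [mgf_ite_sub_ite (hX j) huv, hu, hv, hexp, hexp_neg]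
    field_simp
    linear_combination (√r * (√q - √r)) * sq_sqrt hq.le
      + (√q * (√r - √q)) * sq_sqrt (hq.le.trans hqr)
  calc μ.real {ω | #{j | X j ω = v} ≤ #{j | X j ω = u}}
      ≤ μ.real {ω | 0 ≤ (∑ j, Y j) ω} := measureReal_mono fun ω hω => by
        simp only [Set.mem_ofPred_eq, hsum, sub_nonneg] at hω ⊢
        exact_mod_cast hω
    _ ≤ exp (-t * 0) * mgf (∑ j, Y j) μ t := measure_ge_le_exp_mul_mgf 0 ht
        (hYindep.integrable_exp_mul_sum hYmeas fun j _ =>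
          integrable_exp_mul_ite_sub_ite (hX j) huv t)
    _ = (1 - (√r - √q) ^ 2) ^ Fintype.card ι := by
        rw [hYindep.mgf_sum hYmeas, Finset.prod_congr rfl fun j _ => hmgf j, prod_const, card_univ]
        simp

end Counts

@[simp]
lemma dvec_zero (p : ℕ → ℝ) : dvec p 0 = √(p 0) := rfl

@[simp]
lemma dvec_succ (p : ℕ → ℝ) (i : ℕ) : dvec p (i + 1) = √(p (i + 1)) - √(p i) := rfl

namespace IsSensorDist

variable {b : ℕ} {p : ℕ → ℝ}

lemma pos_s7 (hp : IsSensorDist b p) {k : ℕ} (hk : k ≤ 2 * b) : 0 < p k := by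
  induction k with
  | zero => exact hp.1
  | succ k ih => exact (ih (by omega)).trans (hp.2.1 k (by omega))

lemma le_one (hp : IsSensorDist b p) {k : ℕ} (hk : k ≤ 2 * b) : p k ≤ 1 :=
  hp.2.2 ▸ single_le_sum (fun _ hi => (hp.pos_s7 (Nat.lt_succ_iff.1 (mem_range.1 hi))).le)
    (mem_range.2 (Nat.lt_succ_of_le hk))

lemma dvec_pos (hp : IsSensorDist b p) {k : ℕ} (hk : k ≤ 2 * b) : 0 < dvec p k := by
  cases k with
  | zero => simpa using hp.1
  | succ k =>
    simpa using sqrt_lt_sqrt (hp.pos_s7 (by omega)).le (hp.2.1 k (by omega))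

lemma dvec_le_one (hp : IsSensorDist b p) {k : ℕ} (hk : k ≤ 2 * b) : dvec p k ≤ 1 := by
  have hsqrt : √(p k) ≤ 1 := sqrt_le_one.2 (hp.le_one hk)
  unfold dvec
  split_ifs with h
  · exact h ▸ hsqrt
  · linarith [sqrt_nonneg (p (k - 1))]

lemma one_sub_dvec_sq_pow_le (hp : IsSensorDist b p) {k : ℕ} (hk : k ≤ 2 * b) (n : ℕ) :
    (1 - dvec p k ^ 2) ^ n ≤ (1 - dmin b p ^ 2) ^ n := by
  have hdmin_pos : 0 < dmin b p :=
    (lt_inf'_iff _).2 fun i hi => hp.dvec_pos (Nat.lt_succ_iff.1 (mem_range.1 hi))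
  have hdmin_le : dmin b p ≤ dvec p k := inf'_le _ (mem_range.2 (Nat.lt_succ_of_le hk))
  gcongr
  exact sub_nonneg.2 (pow_le_one₀ (hp.dvec_pos hk).le (hp.dvec_le_one hk))

end IsSensorDist

theorem detection_error_probability_bound_general (b n : ℕ) (p : ℕ → ℝ)
    (hp : IsSensorDist b p)
    {Ω : Type*} [MeasurableSpace Ω] (μ : Measure Ω) [IsProbabilityMeasure μ]
    (X : Fin n → Ω → ℕ) (hXmeas : ∀ j, Measurable (X j))
    (hXindep : iIndepFun X μ)
    (hXdist : ∀ j, ∀ k ≤ 2 * b, μ {ω | X j ω = k} = ENNReal.ofReal (p k))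
    (N : ℕ → Ω → ℕ)
    (hN : ∀ k ω, N k ω = (Finset.univ.filter fun j : Fin n => X j ω = k).card) :
    (μ {ω | ¬ (0 < N 0 ω ∧ ∀ i < 2 * b, N i ω < N (i + 1) ω)}).toReal ≤
      (2 * (b : ℝ) + 1) * (1 - dmin b p ^ 2) ^ n := by
  have hprob : ∀ j, ∀ k ≤ 2 * b, μ.real {ω | X j ω = k} = p k := fun j k hk => by
    rw [measureReal_def, hXdist j k hk, ENNReal.toReal_ofReal (hp.pos_s7 hk).le]
  have hcover : {ω | ¬ (0 < N 0 ω ∧ ∀ i < 2 * b, N i ω < N (i + 1) ω)} ⊆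
      {ω | N 0 ω = 0} ∪ ⋃ i ∈ range (2 * b), {ω | N (i + 1) ω ≤ N i ω} := fun ω hω => by
    simp only [Set.mem_ofPred_eq, not_and, not_forall, not_lt] at hω
    by_cases h0 : N 0 ω = 0
    · exact Or.inl h0
    · obtain ⟨i, hi, hle⟩ := hω (Nat.pos_of_ne_zero h0)
      exact Or.inr (Set.mem_biUnion (mem_range.2 hi) hle)
  have hempty : μ.real {ω | N 0 ω = 0} ≤ (1 - dmin b p ^ 2) ^ n := by
    simp only [hN]
    rw [measureReal_card_filter_eq_zero hXmeas hXindep fun j => hprob j 0 (Nat.zero_le _),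
      Fintype.card_fin]
    simpa [sq_sqrt hp.1.le] using hp.one_sub_dvec_sq_pow_le (Nat.zero_le _) n
  have hinversion : ∀ i < 2 * b, μ.real {ω | N (i + 1) ω ≤ N i ω} ≤ (1 - dmin b p ^ 2) ^ n := by
    intro i hi
    have hchernoff := measureReal_card_filter_le_card_filter_le hXmeas hXindep
      (Nat.succ_ne_self i).symm (hp.pos_s7 hi.le) (hp.2.1 i hi).le (fun j => hprob j i hi.le)
      (fun j => hprob j (i + 1) hi)
    rw [Fintype.card_fin, ← dvec_succ] at hchernoff
    simp only [hN]
    exact hchernoff.trans (hp.one_sub_dvec_sq_pow_le hi n)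
  calc μ.real {ω | ¬ (0 < N 0 ω ∧ ∀ i < 2 * b, N i ω < N (i + 1) ω)}
      ≤ μ.real {ω | N 0 ω = 0} + ∑ i ∈ range (2 * b), μ.real {ω | N (i + 1) ω ≤ N i ω} :=
        (measureReal_mono hcover).trans ((measureReal_union_le _ _).trans
          (add_le_add le_rfl (measureReal_biUnion_finset_le _ _)))
    _ ≤ (1 - dmin b p ^ 2) ^ n + ∑ i ∈ range (2 * b), (1 - dmin b p ^ 2) ^ n :=
        add_le_add hempty (sum_le_sum fun i hi => hinversion i (mem_range.1 hi))
    _ = (2 * (b : ℝ) + 1) * (1 - dmin b p ^ 2) ^ n := by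
        simp only [sum_const, card_range, nsmul_eq_mul]
        push_cast
        ring

theorem detection_error_probability_bound (b n : ℕ) (hb : 1 ≤ b) (p : ℕ → ℝ)
    (hp : IsSensorDist b p)
    {Ω : Type*} [MeasurableSpace Ω] (μ : Measure Ω) [IsProbabilityMeasure μ]
    (X : Fin n → Ω → ℕ) (hXmeas : ∀ j, Measurable (X j))
    (hXindep : iIndepFun X μ)
    (hXdist : ∀ j, ∀ k ≤ 2 * b, μ {ω | X j ω = k} = ENNReal.ofReal (p k))
    (N : ℕ → Ω → ℕ)
    (hN : ∀ k ω, N k ω = (Finset.univ.filter fun j : Fin n => X j ω = k).card) :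
    (μ {ω | ¬ (0 < N 0 ω ∧ ∀ i < 2 * b, N i ω < N (i + 1) ω)}).toReal ≤
      (2 * (b : ℝ) + 1) * (1 - dmin b p ^ 2) ^ n :=
  detection_error_probability_bound_general b n p hp μ X hXmeas hXindep hXdist N hN
end

section
/- Let b ≥ 1 be an integer and let p be a sensor-deployment distribution. For each n let X_1, …, X_n be i.i.d. with P(X_j = k) = p_k, let N_k be the count of samples equal to k, and let e_n = P( ¬(0 < N_0 < N_1 < … < N_{2b}) ). Then the error exponent satisfies lim_{n→∞} (1/n) · log₂ e_n = log₂(1 − d_min(p)²). -/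
/-!
The error event is the union of `{N₀ = 0}` and of the events `{N_{i+1} ≤ N_i}`, `i < 2b`. The
first has probability `(1 - p₀)ⁿ = (1 - d₀²)ⁿ`. For the others, record the set `S` of trials
landing on `i` or `i + 1` and the subset `A ⊆ S` of trials landing on `i`: by independence each
such pattern has probability `pᵢ^#A p_{i+1}^(#S - #A) q^(n - #S)`, where `q = 1 - pᵢ - p_{i+1}`.
Since `pᵢ < p_{i+1}`, a pattern with `#S - #A ≤ #A` has probability at most
`√(pᵢ p_{i+1})^#S q^(n - #S)`, and summing over all patterns gives
`(q + 2 √(pᵢ p_{i+1}))ⁿ = (1 - d_{i+1}²)ⁿ`. Conversely the balanced patterns `#A = ⌈#S / 2⌉`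
alone, counted by the central binomial coefficient `≥ 2^#S / (n + 1)`, recover this bound up to a
factor `c / (n + 1)`. Hence `c / (n + 1) · Rⁿ ≤ eₙ ≤ (2b + 1) Rⁿ` with `R = 1 - d_min²`.
-/

open Finset Real MeasureTheory ProbabilityTheory Filter

open scoped Topology

theorem Nat.two_pow_le_succ_mul_choose_half (m : ℕ) : 2 ^ m ≤ (m + 1) * m.choose (m / 2) :=
  calc 2 ^ m = ∑ r ∈ range (m + 1), m.choose r := (Nat.sum_range_choose m).symm
    _ ≤ ∑ _r ∈ range (m + 1), m.choose (m / 2) := sum_le_sum fun r _ => Nat.choose_le_middle r m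
    _ = (m + 1) * m.choose (m / 2) := by simp

theorem le_sqrt_mul_of_le {x y : ℝ} (hx : 0 ≤ x) (hxy : x ≤ y) : x ≤ √(x * y) := by
  calc x = √(x * x) := (sqrt_mul_self hx).symm
    _ ≤ √(x * y) := sqrt_le_sqrt (mul_le_mul_of_nonneg_left hxy hx)

theorem pow_mul_pow_le_sqrt_mul_pow {x y : ℝ} (hx : 0 ≤ x) (hxy : x ≤ y) {a b : ℕ}
    (hba : b ≤ a) : x ^ a * y ^ b ≤ √(x * y) ^ (a + b) := by
  obtain ⟨d, rfl⟩ := Nat.exists_eq_add_of_le hba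
  have hsq : √(x * y) ^ 2 = x * y := sq_sqrt (mul_nonneg hx (hx.trans hxy))
  calc x ^ (b + d) * y ^ b = (x * y) ^ b * x ^ d := by ring
    _ ≤ (x * y) ^ b * √(x * y) ^ d := by
      gcongr
      · exact pow_nonneg (mul_nonneg hx (hx.trans hxy)) b
      · exact le_sqrt_mul_of_le hx hxy
    _ = √(x * y) ^ (b + d + b) := by
      rw [show b + d + b = 2 * b + d by ring, pow_add, pow_mul, hsq]

theorem div_sqrt_mul_mul_pow_le_pow_mul_pow {x y : ℝ} (hx : 0 < x) (hxy : x ≤ y) (m : ℕ) :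
    x / √(x * y) * √(x * y) ^ m ≤ x ^ (m - m / 2) * y ^ (m / 2) := by
  have hs : 0 < √(x * y) := sqrt_pos.2 (mul_pos hx (hx.trans_le hxy))
  have hsq : √(x * y) ^ 2 = x * y := sq_sqrt (mul_pos hx (hx.trans_le hxy)).le
  obtain ⟨k, rfl | rfl⟩ := Nat.even_or_odd' m
  · have hk : 2 * k - 2 * k / 2 = k := by omega
    rw [hk, Nat.mul_div_cancel_left k two_pos]
    calc x / √(x * y) * √(x * y) ^ (2 * k) ≤ 1 * √(x * y) ^ (2 * k) := by
          gcongr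
          exact (div_le_one hs).2 (le_sqrt_mul_of_le hx.le hxy)
      _ = x ^ k * y ^ k := by rw [one_mul, pow_mul, hsq, mul_pow]
  · have hk : (2 * k + 1) / 2 = k := by omega
    rw [hk, show 2 * k + 1 - k = k + 1 by omega, pow_succ, pow_mul, hsq]
    field_simp
    exact le_of_eq (by ring)

section Powerset

variable {ι : Type*}

theorem sum_powerset_filter_le_add_two_sqrt_pow (s : Finset ι) {x y q : ℝ} (hx : 0 ≤ x)
    (hxy : x ≤ y) (hq : 0 ≤ q) :
    ∑ S ∈ s.powerset, ∑ A ∈ S.powerset with #S - #A ≤ #A,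
        x ^ #A * y ^ (#S - #A) * q ^ (#s - #S) ≤ (q + 2 * √(x * y)) ^ #s := by
  calc _ ≤ ∑ S ∈ s.powerset, ∑ _A ∈ S.powerset, √(x * y) ^ #S * q ^ (#s - #S) := by
        refine sum_le_sum fun S _ => ?_
        refine (sum_le_sum fun A hA => ?_).trans
          (sum_le_sum_of_subset_of_nonneg (filter_subset _ _) fun _ _ _ =>
            mul_nonneg (pow_nonneg (sqrt_nonneg _) _) (pow_nonneg hq _))
        obtain ⟨hAS, hle⟩ := mem_filter.1 hA
        have hcard : #A + (#S - #A) = #S := by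
          have := card_le_card (mem_powerset.1 hAS); omega
        gcongr
        simpa only [hcard] using pow_mul_pow_le_sqrt_mul_pow hx hxy hle
    _ = ∑ S ∈ s.powerset, (2 * √(x * y)) ^ #S * q ^ (#s - #S) := by
        simp only [sum_const, card_powerset, nsmul_eq_mul, mul_pow]; push_cast; ring_nf
    _ = (q + 2 * √(x * y)) ^ #s := by rw [sum_pow_mul_eq_add_pow, add_comm]

theorem div_mul_add_two_sqrt_pow_le_sum_powerset_filter (s : Finset ι) {x y q : ℝ} (hx : 0 < x)
    (hxy : x ≤ y) (hq : 0 ≤ q) :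
    x / √(x * y) / (#s + 1) * (q + 2 * √(x * y)) ^ #s ≤
      ∑ S ∈ s.powerset, ∑ A ∈ S.powerset with #S - #A ≤ #A,
        x ^ #A * y ^ (#S - #A) * q ^ (#s - #S) := by
  have hs : 0 < √(x * y) := sqrt_pos.2 (mul_pos hx (hx.trans_le hxy))
  rw [show q + 2 * √(x * y) = 2 * √(x * y) + q by ring, ← sum_pow_mul_eq_add_pow, mul_sum]
  refine sum_le_sum fun S hS => ?_
  have hSs : #S ≤ #s := card_le_card (mem_powerset.1 hS)
  have hsub : powersetCard (#S - #S / 2) S ⊆ {A ∈ S.powerset | #S - #A ≤ #A} := fun A hA => by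
    obtain ⟨hAS, hA⟩ := mem_powersetCard.1 hA
    exact mem_filter.2 ⟨mem_powerset.2 hAS, by omega⟩
  refine le_trans ?_ (sum_le_sum_of_subset_of_nonneg hsub fun _ _ _ =>
    mul_nonneg (mul_nonneg (pow_nonneg hx.le _) (pow_nonneg (hx.le.trans hxy) _))
      (pow_nonneg hq _))
  rw [sum_congr rfl fun A hA => by rw [(mem_powersetCard.1 hA).2,
    show #S - (#S - #S / 2) = #S / 2 by omega], sum_const, card_powersetCard, nsmul_eq_mul,
    Nat.choose_symm (Nat.div_le_self _ _)]
  have hchoose : (2 : ℝ) ^ #S ≤ (#s + 1) * (#S).choose (#S / 2) := by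
    calc (2 : ℝ) ^ #S ≤ ((#S + 1) * (#S).choose (#S / 2) : ℕ) := by
          exact_mod_cast Nat.two_pow_le_succ_mul_choose_half _
      _ ≤ (#s + 1) * (#S).choose (#S / 2) := by push_cast; gcongr
  have hpow := div_sqrt_mul_mul_pow_le_pow_mul_pow hx hxy #S
  calc x / √(x * y) / (#s + 1) * ((2 * √(x * y)) ^ #S * q ^ (#s - #S))
      = 2 ^ #S / (#s + 1) * (x / √(x * y) * √(x * y) ^ #S) * q ^ (#s - #S) := by ring
    _ ≤ (#S).choose (#S / 2) * (x ^ (#S - #S / 2) * y ^ (#S / 2)) * q ^ (#s - #S) := by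
        refine mul_le_mul_of_nonneg_right (mul_le_mul ((div_le_iff₀' (by positivity)).2 hchoose)
          hpow (by positivity) (by positivity)) (pow_nonneg hq _)
    _ = _ := by ring

end Powerset

section Counts

variable {Ω : Type*} {X : ℕ → Ω → ℕ}

def typeCount (X : ℕ → Ω → ℕ) (n k : ℕ) (ω : Ω) : ℕ := #{j ∈ range n | X j ω = k}

def hitPattern (X : ℕ → Ω → ℕ) (n u v : ℕ) (ω : Ω) : Finset ℕ × Finset ℕ :=
  ({j ∈ range n | X j ω = u ∨ X j ω = v}, {j ∈ range n | X j ω = u})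

theorem card_hitPattern_fst {u v : ℕ} (huv : u ≠ v) (n : ℕ) (ω : Ω) :
    #(hitPattern X n u v ω).1 = typeCount X n u ω + typeCount X n v ω := by
  rw [hitPattern, filter_or,
    card_union_of_disjoint (disjoint_filter.2 fun j _ (hu : X j ω = u) hv => huv (hu ▸ hv))]
  rfl

theorem hitPattern_preimage_singleton {u v n : ℕ} (huv : u ≠ v) {S A : Finset ℕ} (hAS : A ⊆ S)
    (hS : S ⊆ range n) :
    hitPattern X n u v ⁻¹' {(S, A)} =
      ⋂ j ∈ range n, X j ⁻¹' (if j ∈ A then {u} else if j ∈ S then {v} else {u, v}ᶜ) := by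
  ext ω
  simp only [Set.mem_preimage, Set.mem_singleton_iff, hitPattern, Prod.mk.injEq, Finset.ext_iff,
    mem_filter, Set.mem_iInter]
  constructor
  · rintro ⟨hSω, hAω⟩ j hj
    have := hSω j; have := hAω j
    split_ifs <;> simp_all
  · intro h
    have hvu := huv.symm
    refine ⟨fun j => ?_, fun j => ?_⟩ <;> have hAj := @hAS j <;> by_cases hj : j < n
    · have hXj := h j (mem_range.2 hj); split_ifs at hXj <;> simp_all
    · have := fun hjS => hj (mem_range.1 (hS hjS)); simp_all
    · have hXj := h j (mem_range.2 hj); split_ifs at hXj <;> simp_all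
    · have := fun hjS => hj (mem_range.1 (hS hjS)); simp_all

variable [MeasurableSpace Ω] {μ : Measure Ω} [IsProbabilityMeasure μ]

theorem measureReal_preimage_pair (hX : ∀ j, Measurable (X j)) {u v : ℕ} (huv : u ≠ v) (j : ℕ) :
    μ.real (X j ⁻¹' {u, v}) = μ.real {ω | X j ω = u} + μ.real {ω | X j ω = v} := by
  rw [Set.insert_eq, Set.preimage_union, measureReal_union _ (hX j (measurableSet_singleton v))]
  · rfl
  · exact Set.disjoint_left.2 fun ω (h1 : X j ω = u) (h2 : X j ω = v) => huv (h1 ▸ h2)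

theorem measureReal_hitPattern_preimage_singleton (hX : ∀ j, Measurable (X j))
    (hind : iIndepFun X μ) {u v : ℕ} (huv : u ≠ v) {x y : ℝ}
    (hu : ∀ j, μ.real {ω | X j ω = u} = x) (hv : ∀ j, μ.real {ω | X j ω = v} = y)
    {n : ℕ} {S A : Finset ℕ} (hAS : A ⊆ S) (hS : S ⊆ range n) :
    μ.real (hitPattern X n u v ⁻¹' {(S, A)}) =
      x ^ #A * y ^ (#S - #A) * (1 - x - y) ^ (n - #S) := by
  rw [hitPattern_preimage_singleton huv hAS hS, measureReal_def,
    hind.measure_inter_preimage_eq_mul _ fun _ _ => MeasurableSet.of_discrete, ENNReal.toReal_prod]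
  have hfactor : ∀ j, (μ (X j ⁻¹' if j ∈ A then {u} else if j ∈ S then {v} else {u, v}ᶜ)).toReal
      = if j ∈ A then x else if j ∈ S then y else 1 - x - y := fun j => by
    split_ifs
    · exact hu j
    · exact hv j
    · rw [Set.preimage_compl, ← measureReal_def, probReal_compl_eq_one_sub
        (hX j MeasurableSet.of_discrete), measureReal_preimage_pair hX huv, hu, hv, sub_sub]
  have hA : ∏ j ∈ A, (if j ∈ A then x else if j ∈ S then y else 1 - x - y) = x ^ #A := by
    rw [prod_congr rfl fun j hj => if_pos hj, prod_const]
  have hSA : ∏ j ∈ S \ A, (if j ∈ A then x else if j ∈ S then y else 1 - x - y)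
      = y ^ (#S - #A) := by
    rw [prod_congr rfl fun j hj => by rw [if_neg (mem_sdiff.1 hj).2, if_pos (mem_sdiff.1 hj).1],
      prod_const, card_sdiff_of_subset hAS]
  have hnS : ∏ j ∈ range n \ S, (if j ∈ A then x else if j ∈ S then y else 1 - x - y)
      = (1 - x - y) ^ (n - #S) := by
    rw [prod_congr rfl fun j hj => by
      rw [if_neg fun h => (mem_sdiff.1 hj).2 (hAS h), if_neg (mem_sdiff.1 hj).2],
      prod_const, card_sdiff_of_subset hS, card_range]
  rw [prod_congr rfl fun j _ => hfactor j, ← prod_sdiff hS, ← prod_sdiff hAS, hA, hSA, hnS]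
  ring

theorem measureReal_typeCount_pair_eq_sum (hX : ∀ j, Measurable (X j)) (hind : iIndepFun X μ)
    {u v : ℕ} (huv : u ≠ v) {x y : ℝ} (hu : ∀ j, μ.real {ω | X j ω = u} = x)
    (hv : ∀ j, μ.real {ω | X j ω = v} = y) (n : ℕ) (P : ℕ → ℕ → Prop) [DecidableRel P] :
    μ.real {ω | P (typeCount X n u ω) (typeCount X n v ω)} =
      ∑ S ∈ (range n).powerset, ∑ A ∈ S.powerset with P #A (#S - #A),
        x ^ #A * y ^ (#S - #A) * (1 - x - y) ^ (n - #S) := by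
  set r : Finset (Finset ℕ × Finset ℕ) :=
    {z ∈ (range n).powerset ×ˢ (range n).powerset | z.2 ⊆ z.1 ∧ P #z.2 (#z.1 - #z.2)}
  have hr : ∀ z, z ∈ r ↔
      z.1 ∈ (range n).powerset ∧ z.2 ∈ {A ∈ z.1.powerset | P #A (#z.1 - #A)} := by
    intro z
    simp only [r, mem_filter, mem_product, mem_powerset]
    exact ⟨fun ⟨⟨hS, _⟩, hAS, hP⟩ => ⟨hS, hAS, hP⟩,
      fun ⟨hS, hAS, hP⟩ => ⟨⟨hS, hAS.trans hS⟩, hAS, hP⟩⟩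
  have hevent : {ω | P (typeCount X n u ω) (typeCount X n v ω)} = hitPattern X n u v ⁻¹' r := by
    ext ω
    have hS : (hitPattern X n u v ω).1 ⊆ range n := filter_subset _ _
    have hAS : (hitPattern X n u v ω).2 ⊆ (hitPattern X n u v ω).1 :=
      monotone_filter_right _ fun _ _ => Or.inl
    have hA : #(hitPattern X n u v ω).2 = typeCount X n u ω := rfl
    simp only [Set.mem_ofPred_eq, Set.mem_preimage, mem_coe, hr, mem_powerset, mem_filter,
      card_hitPattern_fst huv, hS, hAS, hA, Nat.add_sub_cancel_left, true_and]
  rw [hevent, ← sum_measureReal_preimage_singleton r, sum_finset_product r (range n).powerset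
    (fun S => {A ∈ S.powerset | P #A (#S - #A)}) hr]
  · exact sum_congr rfl fun S hS => sum_congr rfl fun A hA =>
      measureReal_hitPattern_preimage_singleton hX hind huv hu hv
        (mem_powerset.1 (mem_filter.1 hA).1) (mem_powerset.1 hS)
  · intro z hz
    obtain ⟨hS, hA⟩ := (hr z).1 hz
    rw [hitPattern_preimage_singleton huv (mem_powerset.1 (mem_filter.1 hA).1)
      (mem_powerset.1 hS)]
    exact Finset.measurableSet_biInter _ fun j _ => hX j MeasurableSet.of_discrete

theorem measureReal_typeCount_eq_zero (hX : ∀ j, Measurable (X j)) (hind : iIndepFun X μ)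
    {u : ℕ} {x : ℝ} (hu : ∀ j, μ.real {ω | X j ω = u} = x) (n : ℕ) :
    μ.real {ω | typeCount X n u ω = 0} = (1 - x) ^ n := by
  have hevent : {ω | typeCount X n u ω = 0} = ⋂ j ∈ range n, X j ⁻¹' {u}ᶜ := by
    ext ω
    simp [typeCount, filter_eq_empty_iff]
  have hfactor : ∀ j, (μ (X j ⁻¹' {u}ᶜ)).toReal = 1 - x := fun j => by
    rw [Set.preimage_compl, ← measureReal_def,
      probReal_compl_eq_one_sub (hX j MeasurableSet.of_discrete)]
    exact congrArg (1 - ·) (hu j)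
  rw [hevent, measureReal_def,
    hind.measure_inter_preimage_eq_mul _ fun _ _ => MeasurableSet.of_discrete, ENNReal.toReal_prod,
    prod_congr rfl fun j _ => hfactor j, prod_const, card_range]

theorem measureReal_typeCount_le_typeCount_le (hX : ∀ j, Measurable (X j))
    (hind : iIndepFun X μ) {u v : ℕ} (huv : u ≠ v) {x y : ℝ}
    (hu : ∀ j, μ.real {ω | X j ω = u} = x) (hv : ∀ j, μ.real {ω | X j ω = v} = y)
    (hx : 0 ≤ x) (hxy : x ≤ y) (hxy₁ : x + y ≤ 1) (n : ℕ) :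
    μ.real {ω | typeCount X n v ω ≤ typeCount X n u ω} ≤ (1 - x - y + 2 * √(x * y)) ^ n := by
  have h := sum_powerset_filter_le_add_two_sqrt_pow (range n) hx hxy (q := 1 - x - y)
    (by linarith)
  rw [card_range] at h
  rwa [measureReal_typeCount_pair_eq_sum hX hind huv hu hv n fun a b => b ≤ a]

theorem le_measureReal_typeCount_le_typeCount (hX : ∀ j, Measurable (X j))
    (hind : iIndepFun X μ) {u v : ℕ} (huv : u ≠ v) {x y : ℝ}
    (hu : ∀ j, μ.real {ω | X j ω = u} = x) (hv : ∀ j, μ.real {ω | X j ω = v} = y)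
    (hx : 0 < x) (hxy : x ≤ y) (hxy₁ : x + y ≤ 1) (n : ℕ) :
    x / √(x * y) / (n + 1) * (1 - x - y + 2 * √(x * y)) ^ n ≤
      μ.real {ω | typeCount X n v ω ≤ typeCount X n u ω} := by
  have h := div_mul_add_two_sqrt_pow_le_sum_powerset_filter (range n) hx hxy (q := 1 - x - y)
    (by linarith)
  rw [card_range] at h
  rwa [measureReal_typeCount_pair_eq_sum hX hind huv hu hv n fun a b => b ≤ a]

end Counts

theorem tendsto_logb_add_one_div_atTop :
    Tendsto (fun n : ℕ => logb 2 ((n : ℝ) + 1) / n) atTop (𝓝 0) := by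
  have h := (tendsto_pow_logb_div_mul_add_atTop (b := 2) 1 (-1) 1 one_ne_zero).comp
    (tendsto_atTop_add_const_right _ 1 tendsto_natCast_atTop_atTop)
  refine h.congr fun n => ?_
  simp

theorem tendsto_inv_mul_logb_of_bounds {R c C : ℝ} {e : ℕ → ℝ} (hR : 0 < R) (hc : 0 < c)
    (hlo : ∀ n : ℕ, c / (n + 1) * R ^ n ≤ e n) (hhi : ∀ n, e n ≤ C * R ^ n) :
    Tendsto (fun n : ℕ => 1 / (n : ℝ) * logb 2 (e n)) atTop (𝓝 (logb 2 R)) := by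
  have hC : 0 < C := by
    have h := (hlo 0).trans (hhi 0)
    simp only [Nat.cast_zero, zero_add, div_one, pow_zero, mul_one] at h
    linarith
  have he : ∀ n, 0 < e n := fun n => (by positivity : 0 < c / (n + 1) * R ^ n).trans_le (hlo n)
  have hlogb : ∀ a > 0, ∀ n : ℕ, 0 < n →
      1 / (n : ℝ) * logb 2 (a * R ^ n) = logb 2 a / n + logb 2 R := fun a ha n hn => by
    rw [logb_mul ha.ne' (pow_pos hR n).ne', logb_pow]
    field_simp
  have hgeom : ∀ a > 0, Tendsto (fun n : ℕ => logb 2 a / n + logb 2 R) atTop (𝓝 (logb 2 R)) :=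
    fun a _ => by
      simpa using (tendsto_const_div_atTop_nhds_zero_nat (logb 2 a)).add_const (logb 2 R)
  refine tendsto_of_tendsto_of_tendsto_of_le_of_le'
    (g := fun n : ℕ => logb 2 c / n + logb 2 R - logb 2 ((n : ℝ) + 1) / n)
    (h := fun n : ℕ => logb 2 C / n + logb 2 R)
    (by simpa using (hgeom c hc).sub tendsto_logb_add_one_div_atTop) (hgeom C hC) ?_ ?_
  · filter_upwards [eventually_gt_atTop 0] with n hn
    calc _ = 1 / (n : ℝ) * logb 2 (c / (n + 1) * R ^ n) := by
          rw [show c / (n + 1) * R ^ n = c * R ^ n / (n + 1) by ring,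
            logb_div (by positivity) (by positivity), mul_sub, hlogb c hc n hn]
          ring
      _ ≤ _ := mul_le_mul_of_nonneg_left
          ((logb_le_logb one_lt_two (by positivity) (he n)).2 (hlo n)) (by positivity)
  · filter_upwards [eventually_gt_atTop 0] with n hn
    rw [← hlogb C hC n hn]
    exact mul_le_mul_of_nonneg_left
      ((logb_le_logb one_lt_two (he n) (by positivity)).2 (hhi n)) (by positivity)

def BreaksChainAt (c : ℕ → ℕ) : ℕ → Prop
  | 0 => c 0 = 0
  | i + 1 => c (i + 1) ≤ c i

theorem not_chain_iff_exists_breaksChainAt (c : ℕ → ℕ) (m : ℕ) :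
    ¬(0 < c 0 ∧ ∀ i < m, c i < c (i + 1)) ↔ ∃ i ≤ m, BreaksChainAt c i := by
  constructor
  · intro h
    by_cases h0 : c 0 = 0
    · exact ⟨0, Nat.zero_le _, h0⟩
    · push Not at h
      obtain ⟨i, hi, hle⟩ := h (Nat.pos_of_ne_zero h0)
      exact ⟨i + 1, hi, hle⟩
  · rintro ⟨_ | i, hi, h⟩ ⟨h0, hlt⟩
    · exact h0.ne' h
    · exact (hlt i hi).not_ge h

section SensorDist

variable {b : ℕ} {p : ℕ → ℝ}

theorem IsSensorDist.pos_s10 (hp : IsSensorDist b p) {k : ℕ} (hk : k ≤ 2 * b) : 0 < p k := by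
  induction k with
  | zero => exact hp.1
  | succ k ih => exact (ih (by omega)).trans (hp.2.1 k (by omega))

theorem IsSensorDist.add_succ_le_one (hp : IsSensorDist b p) {i : ℕ} (hi : i < 2 * b) :
    p i + p (i + 1) ≤ 1 :=
  hp.2.2 ▸ add_le_sum (fun k hk => (hp.pos_s10 (Nat.lt_succ_iff.1 (mem_range.1 hk))).le)
    (mem_range.2 (by omega)) (mem_range.2 (by omega)) (by omega)

theorem one_sub_dvec_zero_sq (h : 0 ≤ p 0) : 1 - dvec p 0 ^ 2 = 1 - p 0 := by
  rw [dvec, if_pos rfl, sq_sqrt h]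

theorem one_sub_dvec_succ_sq {i : ℕ} (hi : 0 ≤ p i) (hi₁ : 0 ≤ p (i + 1)) :
    1 - dvec p (i + 1) ^ 2 = 1 - p i - p (i + 1) + 2 * √(p i * p (i + 1)) := by
  rw [dvec, if_neg i.succ_ne_zero, Nat.add_sub_cancel, sqrt_mul hi]
  linear_combination -sq_sqrt hi - sq_sqrt hi₁

theorem IsSensorDist.dvec_pos_s10 (hp : IsSensorDist b p) {i : ℕ} (hi : i ≤ 2 * b) :
    0 < dvec p i := by
  cases i with
  | zero => exact sqrt_pos.2 hp.1
  | succ i =>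
    rw [dvec, if_neg i.succ_ne_zero, Nat.add_sub_cancel, sub_pos]
    exact sqrt_lt_sqrt (hp.pos_s10 (by omega)).le (hp.2.1 i (by omega))

theorem dmin_le_dvec {i : ℕ} (hi : i ≤ 2 * b) : dmin b p ≤ dvec p i :=
  inf'_le _ (mem_range.2 (by omega))

theorem exists_dmin_eq_dvec (b : ℕ) (p : ℕ → ℝ) : ∃ i ≤ 2 * b, dmin b p = dvec p i := by
  obtain ⟨i, hi, h⟩ := exists_mem_eq_inf' (s := range (2 * b + 1)) (nonempty_range_iff.2 (by omega))
    (dvec p)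
  exact ⟨i, by have := mem_range.1 hi; omega, h⟩

theorem IsSensorDist.one_sub_dvec_sq_pos (hp : IsSensorDist b p) (hb : 1 ≤ b) {i : ℕ}
    (hi : i ≤ 2 * b) : 0 < 1 - dvec p i ^ 2 := by
  cases i with
  | zero =>
    rw [one_sub_dvec_zero_sq hp.1.le]
    linarith [hp.add_succ_le_one (i := 0) (by omega), hp.pos_s10 (k := 1) (by omega)]
  | succ i =>
    have hpi := hp.pos_s10 (k := i) (by omega)
    rw [one_sub_dvec_succ_sq hpi.le (hp.pos_s10 hi).le]
    linarith [hp.add_succ_le_one (i := i) (by omega), sqrt_pos.2 (mul_pos hpi (hp.pos_s10 hi))]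

theorem IsSensorDist.one_sub_dvec_sq_le (hp : IsSensorDist b p) {i : ℕ} (hi : i ≤ 2 * b) :
    1 - dvec p i ^ 2 ≤ 1 - dmin b p ^ 2 := by
  obtain ⟨i₀, hi₀, h⟩ := exists_dmin_eq_dvec b p
  have := pow_le_pow_left₀ (h ▸ hp.dvec_pos_s10 hi₀).le (dmin_le_dvec hi) 2
  linarith

variable {Ω : Type*} [MeasurableSpace Ω] {μ : Measure Ω} [IsProbabilityMeasure μ]
  {X : ℕ → Ω → ℕ}

theorem measureReal_breaksChainAt_le (hp : IsSensorDist b p) (hX : ∀ j, Measurable (X j))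
    (hind : iIndepFun X μ) (hdist : ∀ j, ∀ k ≤ 2 * b, μ.real {ω | X j ω = k} = p k)
    {i : ℕ} (hi : i ≤ 2 * b) (n : ℕ) :
    μ.real {ω | BreaksChainAt (typeCount X n · ω) i} ≤ (1 - dvec p i ^ 2) ^ n := by
  cases i with
  | zero =>
    rw [one_sub_dvec_zero_sq hp.1.le]
    exact (measureReal_typeCount_eq_zero hX hind (hdist · 0 hi) n).le
  | succ i =>
    rw [one_sub_dvec_succ_sq (hp.pos_s10 (by omega)).le (hp.pos_s10 hi).le]
    exact measureReal_typeCount_le_typeCount_le hX hind i.succ_ne_self.symm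
      (hdist · i (by omega)) (hdist · (i + 1) hi) (hp.pos_s10 (by omega)).le (hp.2.1 i (by omega)).le
      (hp.add_succ_le_one (by omega)) n

theorem exists_pos_le_measureReal_breaksChainAt (hp : IsSensorDist b p)
    (hX : ∀ j, Measurable (X j)) (hind : iIndepFun X μ)
    (hdist : ∀ j, ∀ k ≤ 2 * b, μ.real {ω | X j ω = k} = p k) {i : ℕ} (hi : i ≤ 2 * b) :
    ∃ c > 0, ∀ n : ℕ, c / (n + 1) * (1 - dvec p i ^ 2) ^ n ≤
      μ.real {ω | BreaksChainAt (typeCount X n · ω) i} := by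
  cases i with
  | zero =>
    refine ⟨1, one_pos, fun n => ?_⟩
    rw [one_sub_dvec_zero_sq hp.1.le, ← measureReal_typeCount_eq_zero hX hind (hdist · 0 hi) n]
    exact mul_le_of_le_one_left measureReal_nonneg
      ((div_le_one (by positivity)).2 (by linarith [n.cast_nonneg (α := ℝ)]))
  | succ i =>
    have hpi := hp.pos_s10 (k := i) (by omega)
    refine ⟨p i / √(p i * p (i + 1)), div_pos hpi (sqrt_pos.2 (mul_pos hpi (hp.pos_s10 hi))),
      fun n => ?_⟩
    rw [one_sub_dvec_succ_sq hpi.le (hp.pos_s10 hi).le]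
    exact le_measureReal_typeCount_le_typeCount hX hind i.succ_ne_self.symm
      (hdist · i (by omega)) (hdist · (i + 1) hi) hpi (hp.2.1 i (by omega)).le
      (hp.add_succ_le_one (by omega)) n

end SensorDist

theorem detection_error_exponent (b : ℕ) (hb : 1 ≤ b) (p : ℕ → ℝ)
    (hp : IsSensorDist b p)
    {Ω : Type*} [MeasurableSpace Ω] (μ : Measure Ω) [IsProbabilityMeasure μ]
    (X : ℕ → Ω → ℕ) (hXmeas : ∀ j, Measurable (X j))
    (hXindep : iIndepFun X μ)
    (hXdist : ∀ j, ∀ k ≤ 2 * b, μ {ω | X j ω = k} = ENNReal.ofReal (p k))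
    (N : ℕ → ℕ → Ω → ℕ)
    (hN : ∀ n k ω, N n k ω = ((Finset.range n).filter fun j => X j ω = k).card)
    (e : ℕ → ℝ)
    (he : ∀ n, e n =
      (μ {ω | ¬ (0 < N n 0 ω ∧ ∀ i < 2 * b, N n i ω < N n (i + 1) ω)}).toReal) :
    Tendsto (fun n : ℕ => (1 / (n : ℝ)) * Real.logb 2 (e n)) atTop
      (nhds (Real.logb 2 (1 - dmin b p ^ 2))) := by
  have hdist : ∀ j, ∀ k ≤ 2 * b, μ.real {ω | X j ω = k} = p k := fun j k hk => by
    rw [measureReal_def, hXdist j k hk, ENNReal.toReal_ofReal (hp.pos_s10 hk).le]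
  have herr : ∀ n, e n =
      μ.real (⋃ i ∈ range (2 * b + 1), {ω | BreaksChainAt (typeCount X n · ω) i}) := fun n => by
    rw [he n, ← measureReal_def]
    congr 1
    ext ω
    simp only [hN, Set.mem_ofPred_eq, Set.mem_iUnion, mem_range, Nat.lt_succ_iff, exists_prop]
    exact not_chain_iff_exists_breaksChainAt (typeCount X n · ω) (2 * b)
  obtain ⟨i₀, hi₀, hmin⟩ := exists_dmin_eq_dvec b p
  obtain ⟨c, hc, hlow⟩ := exists_pos_le_measureReal_breaksChainAt hp hXmeas hXindep hdist hi₀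
  refine tendsto_inv_mul_logb_of_bounds (C := 2 * b + 1) (hmin ▸ hp.one_sub_dvec_sq_pos hb hi₀) hc
    (fun n => ?_) (fun n => ?_)
  · rw [herr, hmin]
    exact (hlow n).trans (measureReal_mono (Set.subset_biUnion_of_mem
      (u := fun i => {ω | BreaksChainAt (typeCount X n · ω) i}) (mem_range.2 (by omega)))
      (measure_ne_top μ _))
  · rw [herr]
    calc _ ≤ ∑ i ∈ range (2 * b + 1), μ.real {ω | BreaksChainAt (typeCount X n · ω) i} :=
          measureReal_biUnion_finset_le _ _
      _ ≤ ∑ _i ∈ range (2 * b + 1), (1 - dmin b p ^ 2) ^ n := sum_le_sum fun i hi => by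
          have hi : i ≤ 2 * b := Nat.lt_succ_iff.1 (mem_range.1 hi)
          exact (measureReal_breaksChainAt_le hp hXmeas hXindep hdist hi n).trans
            (pow_le_pow_left₀ (hp.one_sub_dvec_sq_pos hb hi).le (hp.one_sub_dvec_sq_le hi) n)
      _ = (2 * b + 1) * (1 - dmin b p ^ 2) ^ n := by simp
end
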